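/- CGM optimality in the A-norm: Suppose CGM over a commutative real Riesz algebra R with positive definite symmetric matrix A is feasible up to step ℓ, producing iterates x₀,...,x_ℓ. Then for k < ℓ and every x ∈ x₀ + K(A, r₀, k-1), one has ‖x_ℓ - x‖_A² ≥ ‖x_ℓ - x_k‖_A² , i.e., x_k minimizes the A-distance to x_ℓ over the affine Krylov subspace x₀ + K(A, r₀, k-1). -/

import Mathlib

open Matrix

/-- `a` is strictly positive: nonnegative, nonzero and invertible. -/
def SPos {R : Type*} [Ring R] [PartialOrder R] (a : R) : Prop :=
  0 ≤ a ∧ a ≠ 0 ∧ IsUnit a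

/-- A Riesz algebra: a partially ordered, strictly archimedean, lattice-ordered
commutative ℝ-algebra. -/
class RieszAlgebra (R : Type*) extends CommRing R, Lattice R, Algebra ℝ R where
  add_le_add_left : ∀ a b : R, a ≤ b → ∀ c : R, c + a ≤ c + b
  mul_nonneg : ∀ a b : R, 0 ≤ a → 0 ≤ b → 0 ≤ a * b
  sq_nonneg : ∀ a : R, 0 ≤ a * a
  smul_nonneg : ∀ (t : ℝ) (a : R), 0 ≤ t → 0 ≤ a → 0 ≤ t • a
  strictly_archimedean : ∀ a b : R, (∀ t : ℝ, SPos (a - t • b)) → b = 0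

/-- A real Riesz algebra: every strictly positive element has a (unique) strictly
positive square root. -/
class RealRieszAlgebra (R : Type*) extends RieszAlgebra R where
  sqrt : R → R
  sqrt_spos : ∀ a : R, SPos a → SPos (sqrt a)
  sqrt_sq : ∀ a : R, SPos a → sqrt a * sqrt a = a
  sqrt_unique : ∀ a b : R, SPos a → SPos b → b * b = a → b = sqrt a

/-!
Since `A (x_ℓ - x_k) = r_k - r_ℓ`, the claim is Pythagoras once every residual `r_j` with
`j ≥ k` is orthogonal to `x_k - x_0 = ∑_{i<k} αᵢ pᵢ` and to the Krylov space
`K(A, r₀, k-1)`. Over a field this is the classical CG orthogonality argument, which divides by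
`αᵢ = rᵢᵀrᵢ / pᵢᵀApᵢ`. Over `R` it is enough that `αᵢ` is a non-zero-divisor, i.e. that
`rᵢᵀrᵢ` is one: if `c · rᵢᵀrᵢ = 0` then `c rᵢ = 0` (a sum of squares in a Riesz algebra vanishes
only if every term does), hence `c pᵢ = 0` and `c · pᵢᵀApᵢ = 0`, so `c = 0` as `pᵢᵀApᵢ` is a unit.
With the `αᵢ` cancellable, a non-zero-divisor multiple of `A^m r₀` lies in `span(p₀, …, p_m)`,
which is orthogonal to `r_j` for `m < j`.
-/

namespace RieszAlgebra

variable {R : Type*} [RieszAlgebra R]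

instance toAddLeftMono : AddLeftMono R := ⟨fun c _ _ h => RieszAlgebra.add_le_add_left _ _ h c⟩

/-- Every `1 - t • u` is strictly positive: it is the square of `1 - (t / 2) • u` and has
inverse `1 + t • u`. -/
theorem eq_zero_of_mul_self_eq_zero {u : R} (hu : u * u = 0) : u = 0 := by
  nontriviality R
  refine strictly_archimedean 1 u fun t => ?_
  have hsq : ∀ s : ℝ, (s • u) * (s • u) = 0 := fun s => by
    rw [smul_mul_smul_comm, hu, smul_zero]
  have hunit : (1 - t • u) * (1 + t • u) = 1 := by
    linear_combination -(hsq t)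
  have hroot : (1 - (t / 2) • u) * (1 - (t / 2) • u) = 1 - t • u := by
    have hhalf : (t / 2) • u + (t / 2) • u = t • u := by rw [← add_smul, add_halves]
    linear_combination hsq (t / 2) - hhalf
  exact ⟨hroot ▸ sq_nonneg _, (IsUnit.of_mul_eq_one _ hunit).ne_zero,
    IsUnit.of_mul_eq_one _ hunit⟩

theorem dotProduct_self_eq_zero {ι : Type*} [Fintype ι] {v : ι → R} (hv : v ⬝ᵥ v = 0) :
    v = 0 := by
  have := (Finset.sum_eq_zero_iff_of_nonneg fun i _ => sq_nonneg (v i)).1 hv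
  exact funext fun i => eq_zero_of_mul_self_eq_zero (this i (Finset.mem_univ i))

theorem smul_eq_zero_of_mul_dotProduct_self_eq_zero {ι : Type*} [Fintype ι] {c : R}
    {v : ι → R} (h : c * (v ⬝ᵥ v) = 0) : c • v = 0 :=
  dotProduct_self_eq_zero <| by
    rw [smul_dotProduct, dotProduct_smul, smul_eq_mul, smul_eq_mul, h, mul_zero]

end RieszAlgebra

open scoped nonZeroDivisors

theorem Matrix.IsSymm.dotProduct_mulVec_comm {R m : Type*} [CommSemiring R] [Fintype m]
    {A : Matrix m m R} (hA : A.IsSymm) (u v : m → R) : u ⬝ᵥ A *ᵥ v = v ⬝ᵥ A *ᵥ u := by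
  rw [← dotProduct_transpose_mulVec, hA]

theorem Matrix.IsSymm.add_dotProduct_mulVec_add {R m : Type*} [CommRing R] [Fintype m]
    {A : Matrix m m R} (hA : A.IsSymm) {u v : m → R} (huv : v ⬝ᵥ A *ᵥ u = 0) :
    (u + v) ⬝ᵥ A *ᵥ (u + v) = u ⬝ᵥ A *ᵥ u + v ⬝ᵥ A *ᵥ v := by
  rw [mulVec_add, dotProduct_add, add_dotProduct, add_dotProduct, huv,
    hA.dotProduct_mulVec_comm u v, huv]
  ring

theorem Matrix.dotProduct_eq_zero_of_mem_span {R m : Type*} [CommSemiring R] [Fintype m]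
    {s : Set (m → R)} {u w : m → R} (hs : ∀ v ∈ s, u ⬝ᵥ v = 0) (hw : w ∈ Submodule.span R s) :
    u ⬝ᵥ w = 0 :=
  Submodule.span_le (p := LinearMap.ker (dotProductBilin R R u)) |>.2 hs hw

section CG

variable {R : Type*} [CommRing R] {n : ℕ}

/-- CGM is feasible up to step `ℓ`. -/
structure IsCGRun (A : Matrix (Fin n) (Fin n) R) (b : Fin n → R) (x r p : ℕ → Fin n → R)
    (α : ℕ → R) (ℓ : ℕ) : Prop where
  p_zero : p 0 = b - A *ᵥ x 0
  isUnit : ∀ j ≤ ℓ, IsUnit (p j ⬝ᵥ A *ᵥ p j)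
  x_succ : ∀ j < ℓ, x (j + 1) = x j + α j • p j
  r_eq : ∀ j ≤ ℓ, r j = b - A *ᵥ x j
  p_succ : ∀ j < ℓ, p (j + 1) = r (j + 1) -
    ((r (j + 1) ⬝ᵥ A *ᵥ p j) * Ring.inverse (p j ⬝ᵥ A *ᵥ p j)) • p j
  α_eq : ∀ j ≤ ℓ, α j = (r j ⬝ᵥ p j) * Ring.inverse (p j ⬝ᵥ A *ᵥ p j)

namespace IsCGRun

open Submodule

variable {A : Matrix (Fin n) (Fin n) R} {b : Fin n → R} {x r p : ℕ → Fin n → R} {α : ℕ → R}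
  {ℓ i j k m : ℕ} (h : IsCGRun A b x r p α ℓ)
include h

theorem r_zero : r 0 = p 0 := by
  rw [h.r_eq 0 (Nat.zero_le _), h.p_zero]

theorem r_succ (hj : j < ℓ) : r (j + 1) = r j - α j • A *ᵥ p j := by
  rw [h.r_eq _ hj, h.r_eq _ hj.le, h.x_succ j hj, mulVec_add, mulVec_smul]
  abel

theorem mulVec_x_sub_x (hj : j ≤ ℓ) (hk : k ≤ ℓ) : A *ᵥ (x j - x k) = r k - r j := by
  rw [mulVec_sub, h.r_eq k hk, h.r_eq j hj]
  abel

theorem x_sub_x_zero (hk : k ≤ ℓ) : x k - x 0 = ∑ i ∈ Finset.range k, α i • p i := by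
  induction k with
  | zero => simp
  | succ k ih => rw [h.x_succ k hk, Finset.sum_range_succ, ← ih (by omega)]; abel

theorem r_mem_span (hi : i ≤ ℓ) (him : i ≤ m) : r i ∈ span R (p '' Set.Iic m) := by
  cases i with
  | zero => exact h.r_zero ▸ subset_span ⟨0, Nat.zero_le m, rfl⟩
  | succ i =>
    rw [sub_eq_iff_eq_add.1 (h.p_succ i hi).symm]
    exact add_mem (subset_span ⟨i + 1, him, rfl⟩)
      (smul_mem _ _ (subset_span ⟨i, Set.mem_Iic.2 (by omega), rfl⟩))

theorem dotProduct_self_mem_nonZeroDivisors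
    (hR : ∀ (c : R) (v : Fin n → R), c * (v ⬝ᵥ v) = 0 → c • v = 0) (hj : j ≤ ℓ) :
    r j ⬝ᵥ r j ∈ R⁰ := by
  refine mem_nonZeroDivisors_iff_right.2 fun c hc => ?_
  have hcr := hR c (r j) hc
  have hcp : c • p j = 0 := by
    cases j with
    | zero => rwa [← h.r_zero]
    | succ j =>
      have hcβ : c * (r (j + 1) ⬝ᵥ A *ᵥ p j) = 0 := by
        rw [← smul_eq_mul, ← smul_dotProduct, hcr, zero_dotProduct]
      rw [h.p_succ j hj, smul_sub, hcr, smul_smul, ← mul_assoc, hcβ, zero_mul, zero_smul,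
        sub_zero]
  have hcd : c * (p j ⬝ᵥ A *ᵥ p j) = 0 := by
    rw [← smul_eq_mul, ← smul_dotProduct, hcp, zero_dotProduct]
  exact (h.isUnit j hj).mul_left_eq_zero.1 hcd

theorem r_dotProduct_p_self (hj : j ≤ ℓ) (hr : ∀ i < j, r j ⬝ᵥ p i = 0) :
    r j ⬝ᵥ p j = r j ⬝ᵥ r j := by
  cases j with
  | zero => rw [h.r_zero]
  | succ j =>
    rw [h.p_succ j hj, dotProduct_sub, dotProduct_smul, hr j j.lt_succ_self, smul_zero,
      sub_zero]

theorem α_mul_dotProduct (hj : j ≤ ℓ) (hr : ∀ i < j, r j ⬝ᵥ p i = 0) :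
    α j * (p j ⬝ᵥ A *ᵥ p j) = r j ⬝ᵥ r j := by
  rw [h.α_eq j hj, h.r_dotProduct_p_self hj hr, mul_assoc,
    Ring.inverse_mul_cancel _ (h.isUnit j hj), mul_one]

theorem α_mem_nonZeroDivisors (hs : r j ⬝ᵥ r j ∈ R⁰) (hj : j ≤ ℓ)
    (hr : ∀ i < j, r j ⬝ᵥ p i = 0) : α j ∈ R⁰ :=
  (mul_mem_nonZeroDivisors.1 (h.α_mul_dotProduct hj hr ▸ hs)).1

theorem r_succ_dotProduct_p (hA : A.IsSymm) (hj : j < ℓ) (hr : ∀ i < j, r j ⬝ᵥ p i = 0)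
    (hp : ∀ i < j, p j ⬝ᵥ A *ᵥ p i = 0) : ∀ i < j + 1, r (j + 1) ⬝ᵥ p i = 0 := by
  have hsucc : ∀ v, r (j + 1) ⬝ᵥ v = r j ⬝ᵥ v - α j * (v ⬝ᵥ A *ᵥ p j) := fun v => by
    rw [h.r_succ hj, sub_dotProduct, smul_dotProduct, smul_eq_mul, dotProduct_comm (A *ᵥ p j)]
  intro i hi
  rcases Nat.lt_succ_iff_lt_or_eq.1 hi with hij | rfl
  · rw [hsucc, hr i hij, hA.dotProduct_mulVec_comm, hp i hij, mul_zero, sub_zero]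
  · rw [hsucc, h.α_mul_dotProduct hj.le hr, h.r_dotProduct_p_self hj.le hr, sub_self]

/-- For `i < j`, `αᵢ (r_{j+1}ᵀ A pᵢ) = r_{j+1}ᵀ (rᵢ - r_{i+1}) = 0`, and `αᵢ` cancels. -/
theorem p_succ_dotProduct_mulVec_p (hj : j < ℓ) (hα : ∀ i < j, α i ∈ R⁰)
    (hr : ∀ i < j + 1, r (j + 1) ⬝ᵥ p i = 0) (hp : ∀ i < j, p j ⬝ᵥ A *ᵥ p i = 0) :
    ∀ i < j + 1, p (j + 1) ⬝ᵥ A *ᵥ p i = 0 := by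
  have hsucc : ∀ v, p (j + 1) ⬝ᵥ v = r (j + 1) ⬝ᵥ v -
      (r (j + 1) ⬝ᵥ A *ᵥ p j) * Ring.inverse (p j ⬝ᵥ A *ᵥ p j) * (p j ⬝ᵥ v) := fun v => by
    rw [h.p_succ j hj, sub_dotProduct, smul_dotProduct, smul_eq_mul]
  intro i hi
  rcases Nat.lt_succ_iff_lt_or_eq.1 hi with hij | rfl
  · have hperp : ∀ v ∈ p '' Set.Iic j, r (j + 1) ⬝ᵥ v = 0 := by
      rintro _ ⟨l, hl, rfl⟩
      exact hr l (Nat.lt_succ_of_le hl)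
    have hαr : α i * (r (j + 1) ⬝ᵥ A *ᵥ p i) = 0 := by
      have hαAp : α i • A *ᵥ p i = r i - r (i + 1) := by
        rw [h.r_succ (hij.trans hj), sub_sub_cancel]
      rw [← smul_eq_mul, ← dotProduct_smul, hαAp, dotProduct_sub,
        dotProduct_eq_zero_of_mem_span hperp (h.r_mem_span (by omega) hij.le),
        dotProduct_eq_zero_of_mem_span hperp (h.r_mem_span (by omega) hij), sub_zero]
    rw [hsucc, hp i hij, (mul_left_mem_nonZeroDivisors_eq_zero_iff (hα i hij)).1 hαr,
      mul_zero, sub_zero]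
  · rw [hsucc, mul_assoc, Ring.inverse_mul_cancel _ (h.isUnit i hj.le), mul_one, sub_self]

theorem orthogonal_and_conjugate (hA : A.IsSymm) (hs : ∀ j ≤ ℓ, r j ⬝ᵥ r j ∈ R⁰)
    (hj : j ≤ ℓ) :
    (∀ i < j, r j ⬝ᵥ p i = 0) ∧ ∀ i < j, p j ⬝ᵥ A *ᵥ p i = 0 := by
  induction j using Nat.strong_induction_on with
  | _ j ih =>
    cases j with
    | zero => simp
    | succ j =>
      obtain ⟨hr, hp⟩ := ih j j.lt_succ_self (by omega)
      have hα : ∀ i < j, α i ∈ R⁰ := fun i hi =>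
        h.α_mem_nonZeroDivisors (hs i (by omega)) (by omega) (ih i (by omega) (by omega)).1
      have hr' := h.r_succ_dotProduct_p hA (by omega) hr hp
      exact ⟨hr', h.p_succ_dotProduct_mulVec_p (by omega) hα hr' hp⟩

theorem prod_α_smul_mulVec_mem_span (hm : m < ℓ) {w : Fin n → R}
    (hw : w ∈ span R (p '' Set.Iic m)) :
    (∏ i ∈ Finset.range (m + 1), α i) • A *ᵥ w ∈ span R (p '' Set.Iic (m + 1)) := by
  suffices span R (p '' Set.Iic m) ≤ (span R (p '' Set.Iic (m + 1))).comap
      ((∏ i ∈ Finset.range (m + 1), α i) • A.mulVecLin) from this hw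
  rw [span_le, Set.image_subset_iff]
  intro i (hi : i ≤ m)
  obtain ⟨c, hc⟩ : α i ∣ ∏ i ∈ Finset.range (m + 1), α i :=
    Finset.dvd_prod_of_mem α (Finset.mem_range.2 (by omega))
  have hαAp : α i • A *ᵥ p i = r i - r (i + 1) := by
    rw [h.r_succ (by omega), sub_sub_cancel]
  simp only [Set.mem_preimage, SetLike.mem_coe, mem_comap, LinearMap.smul_apply,
    mulVecLin_apply]
  rw [hc, mul_comm, mul_smul, hαAp]
  exact smul_mem _ _ (sub_mem (h.r_mem_span (by omega) (by omega))
    (h.r_mem_span (by omega) (by omega)))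

theorem exists_smul_pow_mulVec_mem_span (hα : ∀ i < m, α i ∈ R⁰) (hm : m ≤ ℓ) :
    ∃ c ∈ R⁰, c • (A ^ m *ᵥ r 0) ∈ span R (p '' Set.Iic m) := by
  induction m with
  | zero =>
    refine ⟨1, one_mem _, ?_⟩
    rw [one_smul, pow_zero, one_mulVec]
    exact h.r_mem_span (Nat.zero_le _) le_rfl
  | succ m ih =>
    obtain ⟨c, hc, hmem⟩ := ih (fun i hi => hα i (by omega)) (by omega)
    refine ⟨(∏ i ∈ Finset.range (m + 1), α i) * c,
      mul_mem (prod_mem fun i hi => hα i (Finset.mem_range.1 hi)) hc, ?_⟩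
    rw [pow_succ', ← mulVec_mulVec, mul_smul, ← mulVec_smul]
    exact h.prod_α_smul_mulVec_mem_span (by omega) hmem

theorem r_dotProduct_pow_mulVec (hA : A.IsSymm) (hs : ∀ j ≤ ℓ, r j ⬝ᵥ r j ∈ R⁰)
    (hmj : m < j) (hj : j ≤ ℓ) : r j ⬝ᵥ (A ^ m *ᵥ r 0) = 0 := by
  have hα : ∀ i < m, α i ∈ R⁰ := fun i hi =>
    h.α_mem_nonZeroDivisors (hs i (by omega)) (by omega)
      (h.orthogonal_and_conjugate hA hs (by omega)).1
  obtain ⟨c, hc, hmem⟩ := h.exists_smul_pow_mulVec_mem_span hα (by omega)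
  have hperp : ∀ v ∈ p '' Set.Iic m, r j ⬝ᵥ v = 0 := by
    rintro _ ⟨i, hi, rfl⟩
    exact (h.orthogonal_and_conjugate hA hs hj).1 i (lt_of_le_of_lt hi hmj)
  refine (mul_left_mem_nonZeroDivisors_eq_zero_iff hc).1 ?_
  rw [← smul_eq_mul, ← dotProduct_smul]
  exact dotProduct_eq_zero_of_mem_span hperp hmem

theorem r_dotProduct_x_sub (hA : A.IsSymm) (hs : ∀ j ≤ ℓ, r j ⬝ᵥ r j ∈ R⁰) (hk : 1 ≤ k)
    (hkj : k ≤ j) (hj : j ≤ ℓ) {y : Fin n → R}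
    (hy : y - x 0 ∈ span R {v | ∃ i ≤ k - 1, v = A ^ i *ᵥ r 0}) :
    r j ⬝ᵥ (x k - y) = 0 := by
  have hr := (h.orthogonal_and_conjugate hA hs hj).1
  have hxk : r j ⬝ᵥ (x k - x 0) = 0 := by
    rw [h.x_sub_x_zero (hkj.trans hj), dotProduct_sum]
    refine Finset.sum_eq_zero fun i hi => ?_
    rw [dotProduct_smul, hr i ((Finset.mem_range.1 hi).trans_le hkj), smul_zero]
  have hyk : r j ⬝ᵥ (y - x 0) = 0 := by
    refine dotProduct_eq_zero_of_mem_span ?_ hy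
    rintro _ ⟨i, hi, rfl⟩
    exact h.r_dotProduct_pow_mulVec hA hs (by omega) hj
  rw [← sub_sub_sub_cancel_right (x k) y (x 0), dotProduct_sub, hxk, hyk, sub_zero]

end IsCGRun

end CG

/-- CGM optimality: if CGM is feasible up to step `ℓ` and `1 ≤ k < ℓ`, then `x_k`
minimizes the `A`-distance to `x_ℓ` over the affine Krylov space
`x₀ + K(A, r₀, k-1)` : `‖x_ℓ - x_k‖_A² ≤ ‖x_ℓ - x‖_A²` for all such `x`. -/
theorem stmt16 {R : Type*} [RealRieszAlgebra R] {n : ℕ}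
    (A : Matrix (Fin n) (Fin n) R) (hsymm : Aᵀ = A)
    (hpd : ∀ v : Fin n → R, v ≠ 0 → SPos (v ⬝ᵥ A *ᵥ v))
    (b : Fin n → R) (x r p : ℕ → Fin n → R) (α : ℕ → R) (ℓ : ℕ)
    (hp0 : p 0 = b - A *ᵥ x 0)
    (hunit : ∀ j ≤ ℓ, IsUnit (p j ⬝ᵥ A *ᵥ p j))
    (hx : ∀ j < ℓ, x (j + 1) = x j + α j • p j)
    (hr : ∀ j ≤ ℓ, r j = b - A *ᵥ x j)
    (hp : ∀ j < ℓ, p (j + 1) = r (j + 1) -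
      ((r (j + 1) ⬝ᵥ A *ᵥ p j) * Ring.inverse (p j ⬝ᵥ A *ᵥ p j)) • p j)
    (hα : ∀ j ≤ ℓ, α j = (r j ⬝ᵥ p j) * Ring.inverse (p j ⬝ᵥ A *ᵥ p j)) :
    ∀ k : ℕ, 1 ≤ k → k < ℓ →
    ∀ y : Fin n → R, (y - x 0) ∈ Submodule.span R {v | ∃ i ≤ k - 1, v = (A ^ i) *ᵥ r 0} →
      (x ℓ - x k) ⬝ᵥ A *ᵥ (x ℓ - x k) ≤ (x ℓ - y) ⬝ᵥ A *ᵥ (x ℓ - y) := by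
  intro k hk hkl y hy
  have h : IsCGRun A b x r p α ℓ := ⟨hp0, hunit, hx, hr, hp, hα⟩
  have hs : ∀ j ≤ ℓ, r j ⬝ᵥ r j ∈ R⁰ := fun j hj =>
    h.dotProduct_self_mem_nonZeroDivisors
      (fun _ _ => RieszAlgebra.smul_eq_zero_of_mul_dotProduct_self_eq_zero) hj
  have hperp : (x k - y) ⬝ᵥ A *ᵥ (x ℓ - x k) = 0 := by
    rw [h.mulVec_x_sub_x le_rfl hkl.le, dotProduct_sub, dotProduct_comm,
      h.r_dotProduct_x_sub hsymm hs hk le_rfl hkl.le hy, dotProduct_comm,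
      h.r_dotProduct_x_sub hsymm hs hk hkl.le le_rfl hy, sub_zero]
  have hnonneg : 0 ≤ (x k - y) ⬝ᵥ A *ᵥ (x k - y) := by
    by_cases hz : x k - y = 0
    · simp [hz]
    · exact (hpd _ hz).1
  rw [← sub_add_sub_cancel (x ℓ) (x k) y,
    Matrix.IsSymm.add_dotProduct_mulVec_add hsymm hperp]
  exact le_add_of_nonneg_right hnonneg
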